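/- arXiv:1911.03119 — 5 statements merged into one kernel-verified Lean document; each statement's English description precedes it below -/
import Mathlib

section
/- For every n ≥ 0 and every Dyck path P in D_n^{h,≥}, the length of φ(P) equals n (equivalently, φ maps D_n^{h,≥} into the set of Motzkin paths of length n), and φ is a bijection from D_n^{h,≥} to the set M_n of Motzkin paths of length n. -/
inductive Step : Type
  | U | D | F
  deriving DecidableEq, Repr

open Step

/-- Number of occurrences of `p` as a factor (consecutive steps) of `w`. -/
def countFactor (p w : List Step) : ℕ :=
  w.tails.countP fun t => p.isPrefixOf t

/-- `w` is a Dyck path (word over {U,D} with as many U's as D's,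
every prefix having at least as many U's as D's). -/
def IsDyck (w : List Step) : Prop :=
  w.count F = 0 ∧ w.count U = w.count D ∧
    ∀ p : List Step, p <+: w → p.count D ≤ p.count U

/-- `w` is a Motzkin path. -/
def IsMotzkin (w : List Step) : Prop :=
  w.count U = w.count D ∧ ∀ p : List Step, p <+: w → p.count D ≤ p.count U

/-- The (maximal) height of a path. -/
def height (w : List Step) : ℕ :=
  (w.inits.map fun p => p.count U - p.count D).foldr max 0

/-- The set `D^{h,≥}` of Dyck paths with first return decomposition
`P = U α D β` satisfying `h(UαD) ≥ h(β)`, recursively. -/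
inductive DH : List Step → Prop
  | nil : DH []
  | cons (α β : List Step) : DH α → DH β →
      height (U :: (α ++ [D])) ≥ height β → DH (U :: (α ++ [D] ++ β))

/-- The map φ from `D^{h,≥}` to Motzkin paths, as a relation:
φ(ε)=ε, φ(αUD)=φ(α)F, φ(αUUβDγD)=φ(α)φ(γ)Uφ(β)D. -/
inductive Phi : List Step → List Step → Prop
  | nil : Phi [] []
  | flat (α a : List Step) : DH α → Phi α a →
      Phi (α ++ [U, D]) (a ++ [F])
  | up (α β γ a b c : List Step) : DH α → DH β → DH γ →
      Phi α a → Phi β b → Phi γ c →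
      Phi (α ++ [U, U] ++ β ++ [D] ++ γ ++ [D]) (a ++ c ++ U :: (b ++ [D]))

/-- Auxiliary: the list starts with one or more `F`'s followed by a `D`. -/
def fThenD : List Step → Bool
  | F :: D :: _ => true
  | F :: rest => fThenD rest
  | _ => false

/-- Auxiliary: the list starts with one or more `F`'s followed by a `U`. -/
def fThenU : List Step → Bool
  | F :: U :: _ => true
  | F :: rest => fThenU rest
  | _ => false

/-- Number of occurrences of factors of the form `U F^k D` with `k ≥ 1` in `w`. -/
def countUFD (w : List Step) : ℕ :=
  w.tails.countP fun t => match t with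
    | U :: rest => fThenD rest
    | _ => false

/-- Number of occurrences of factors of the form `U F^k U` with `k ≥ 1` in `w`. -/
def countUFU (w : List Step) : ℕ :=
  w.tails.countP fun t => match t with
    | U :: rest => fThenU rest
    | _ => false

/-!
A prime path (`F`, or `U b D` with `b` Motzkin) has no proper nonempty balanced prefix; hence the
decompositions `P = α (U i D)` and `i = U β D γ` used by φ are unique, and φ is a function.
For the inverse, give a Motzkin path the rank: the height of its doubling `U ↦ UU`, `D ↦ DD`,
`F ↦ UD`. On `D^{h,≥}`, the height of `P` is the rank of `φ(P)`, and the height of the last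
component of `P` is the rank of the last prime of `φ(P)`. So if `P = α UUβDγD`, then
`φ(P) = x U φ(β) D` where `x = φ(α) φ(γ)` is the split of `x` with `rank φ(γ) ≤ h(β) + 1` and the
last prime of `φ(α)` of larger rank. Such a split of a Motzkin path always exists and is unique:
uniqueness gives injectivity, and pulling both halves back by induction gives surjectivity.
-/

theorem List.prefix_append_iff {α : Type*} {p x y : List α} :
    p <+: x ++ y ↔ p <+: x ∨ ∃ q, q <+: y ∧ p = x ++ q := by
  constructor
  · rintro ⟨t, ht⟩
    rcases List.append_eq_append_iff.1 ht with ⟨s, hx, -⟩ | ⟨s, hp, hy⟩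
    · exact Or.inl ⟨s, hx.symm⟩
    · exact Or.inr ⟨s, ⟨t, hy.symm⟩, hp⟩
  · rintro (hp | ⟨q, hq, rfl⟩)
    · exact hp.trans (List.prefix_append x y)
    · exact (List.prefix_append_right_inj x).2 hq

theorem counts_cons_U (l : List Step) :
    (U :: l).count U = l.count U + 1 ∧ (U :: l).count D = l.count D := by simp

theorem counts_cons_D (l : List Step) :
    (D :: l).count U = l.count U ∧ (D :: l).count D = l.count D + 1 := by simp

namespace IsMotzkin

theorem nil : IsMotzkin [] :=
  ⟨rfl, fun p hp => by simp [List.prefix_nil.1 hp]⟩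

theorem flat : IsMotzkin [F] :=
  ⟨rfl, fun p hp => by rcases List.prefix_cons_iff.1 hp with rfl | ⟨t, rfl, ht⟩ <;>
    simp_all [List.prefix_nil]⟩

theorem append {x y : List Step} (hx : IsMotzkin x) (hy : IsMotzkin y) :
    IsMotzkin (x ++ y) := by
  refine ⟨by simp [List.count_append, hx.1, hy.1], fun p hp => ?_⟩
  rcases List.prefix_append_iff.1 hp with hp | ⟨q, hq, rfl⟩
  · exact hx.2 p hp
  · have := hy.2 q hq
    have := hx.1
    simp only [List.count_append]
    omega

theorem of_append {x y : List Step} (h : IsMotzkin (x ++ y)) (hx : x.count U = x.count D) :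
    IsMotzkin x ∧ IsMotzkin y := by
  refine ⟨⟨hx, fun p hp => h.2 p (hp.trans (List.prefix_append x y))⟩,
    ⟨?_, fun q hq => ?_⟩⟩
  · have := h.1
    simp only [List.count_append] at this
    omega
  · have := h.2 (x ++ q) ((List.prefix_append_right_inj x).2 hq)
    simp only [List.count_append] at this
    omega

theorem wrap {b : List Step} (hb : IsMotzkin b) : IsMotzkin (U :: (b ++ [D])) := by
  refine ⟨by simp [List.count_append, hb.1], fun p hp => ?_⟩
  rcases List.prefix_cons_iff.1 hp with rfl | ⟨q, rfl, hq⟩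
  · simp
  rcases List.prefix_append_iff.1 hq with hq | ⟨r, hr, rfl⟩
  · have := hb.2 q hq
    have := counts_cons_U q
    omega
  · rcases List.prefix_cons_iff.1 hr with rfl | ⟨s, rfl, hs⟩ <;>
      simp_all [List.prefix_nil, List.count_append, hb.1]

theorem wrap_append {b c : List Step} (hb : IsMotzkin b) (hc : IsMotzkin c) :
    IsMotzkin (U :: (b ++ [D] ++ c)) :=
  hb.wrap.append hc

end IsMotzkin

inductive IsPrime : List Step → Prop
  | flat : IsPrime [F]
  | up {b : List Step} : IsMotzkin b → IsPrime (U :: (b ++ [D]))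

namespace IsPrime

variable {A A' : List Step}

theorem isMotzkin (hA : IsPrime A) : IsMotzkin A := by
  cases hA with
  | flat => exact IsMotzkin.flat
  | up hb => exact hb.wrap

theorem ne_nil (hA : IsPrime A) : A ≠ [] := by
  cases hA <;> simp

theorem eq_nil_or_eq_of_prefix (hA : IsPrime A) {p : List Step} (hp : p <+: A)
    (hbal : p.count U = p.count D) : p = [] ∨ p = A := by
  cases hA with
  | flat =>
    rcases List.prefix_cons_iff.1 hp with h | ⟨t, rfl, ht⟩
    · exact Or.inl h
    · simp [List.prefix_nil.1 ht]
  | @up b hb =>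
    rcases List.prefix_cons_iff.1 hp with h | ⟨q, rfl, hq⟩
    · exact Or.inl h
    right
    rcases List.prefix_append_iff.1 hq with hq | ⟨r, hr, rfl⟩
    · have := hb.2 q hq
      have := counts_cons_U q
      omega
    · rcases List.prefix_cons_iff.1 hr with rfl | ⟨s, rfl, hs⟩
      · rw [List.append_nil] at hbal
        have := hb.1
        have := counts_cons_U b
        omega
      · simp [List.prefix_nil.1 hs]

theorem eq_nil_or_exists_of_append_eq (hA : IsPrime A) {x z w : List Step}
    (hx : x.count U = x.count D) (h : A ++ z = x ++ w) :
    x = [] ∨ ∃ x₂, x = A ++ x₂ ∧ z = x₂ ++ w := by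
  rcases List.append_eq_append_iff.1 h with ⟨x₂, rfl, rfl⟩ | ⟨s, rfl, rfl⟩
  · exact Or.inr ⟨x₂, rfl, rfl⟩
  rcases hA.eq_nil_or_eq_of_prefix (List.prefix_append x s) hx with rfl | hxs
  · exact Or.inl rfl
  · obtain rfl : s = [] := by simpa using hxs
    exact Or.inr ⟨[], by simp, rfl⟩

theorem prime_append_inj (hA : IsPrime A) (hA' : IsPrime A') {z z' : List Step}
    (h : A ++ z = A' ++ z') : A = A' ∧ z = z' := by
  have hAA : A = A' := by
    rcases List.prefix_or_prefix_of_prefix (List.prefix_append A z)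
        (h ▸ List.prefix_append A' z') with hp | hp
    · exact (hA'.eq_nil_or_eq_of_prefix hp hA.isMotzkin.1).resolve_left hA.ne_nil
    · exact ((hA.eq_nil_or_eq_of_prefix hp hA'.isMotzkin.1).resolve_left hA'.ne_nil).symm
  subst hAA
  exact ⟨rfl, List.append_cancel_left h⟩

theorem append_prime_inj (hA : IsPrime A) (hA' : IsPrime A') {y y' : List Step}
    (hy : y.count U = y.count D) (hy' : y'.count U = y'.count D) (h : y ++ A = y' ++ A') :
    y = y' ∧ A = A' := by
  have overlap_nil : ∀ {y y' A A' w : List Step}, IsPrime A → IsPrime A' →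
      y.count U = y.count D → y'.count U = y'.count D → y' = y ++ w → A = w ++ A' → w = [] := by
    intro y y' A A' w hA hA' hy hy' hw hA_eq
    subst hw
    have hbal : w.count U = w.count D := by
      simp only [List.count_append] at hy'
      omega
    refine (hA.eq_nil_or_eq_of_prefix (hA_eq ▸ List.prefix_append w A') hbal).resolve_right ?_
    rintro rfl
    exact hA'.ne_nil (by simpa using hA_eq)
  rcases List.append_eq_append_iff.1 h with ⟨w, hw, hA_eq⟩ | ⟨w, hw, hA_eq⟩
  · obtain rfl := overlap_nil hA hA' hy hy' hw hA_eq
    simp_all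
  · obtain rfl := overlap_nil hA' hA hy' hy hw hA_eq
    simp_all

end IsPrime

theorem exists_eq_append_cons_D_of_descent (e : ℕ) (r : List Step)
    (h : ∃ p, p <+: r ∧ p.count U + e < p.count D) :
    ∃ b s, r = b ++ D :: s ∧ b.count D = b.count U + e ∧
      ∀ q, q <+: b → q.count D ≤ q.count U + e := by
  induction r generalizing e with
  | nil =>
    obtain ⟨p, hp, hlt⟩ := h
    simp [List.prefix_nil.1 hp] at hlt
  | cons x r ih =>
    obtain ⟨p, hp, hlt⟩ := h
    rcases List.prefix_cons_iff.1 hp with rfl | ⟨p, rfl, hp'⟩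
    · simp at hlt
    cases x with
    | U =>
      obtain ⟨b, s, rfl, hb, hq⟩ := ih (e + 1) ⟨p, hp', by have := counts_cons_U p; omega⟩
      refine ⟨U :: b, s, rfl, by have := counts_cons_U b; omega, fun q hq' => ?_⟩
      rcases List.prefix_cons_iff.1 hq' with rfl | ⟨q, rfl, hq''⟩
      · simp
      · have := hq q hq''
        have := counts_cons_U q
        omega
    | F =>
      obtain ⟨b, s, rfl, hb, hq⟩ := ih e ⟨p, hp', by simpa using hlt⟩
      refine ⟨F :: b, s, rfl, by simpa using hb, fun q hq' => ?_⟩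
      rcases List.prefix_cons_iff.1 hq' with rfl | ⟨q, rfl, hq''⟩
      · simp
      · simpa using hq q hq''
    | D =>
      rcases e with _ | e
      · exact ⟨[], r, rfl, rfl, fun q hq => by simp [List.prefix_nil.1 hq]⟩
      obtain ⟨b, s, rfl, hb, hq⟩ := ih e ⟨p, hp', by have := counts_cons_D p; omega⟩
      refine ⟨D :: b, s, rfl, by have := counts_cons_D b; omega, fun q hq' => ?_⟩
      rcases List.prefix_cons_iff.1 hq' with rfl | ⟨q, rfl, hq''⟩
      · simp
      · have := hq q hq''
        have := counts_cons_D q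
        omega

namespace IsMotzkin

theorem exists_eq_prime_append {m : List Step} (hm : IsMotzkin m) (hne : m ≠ []) :
    ∃ A s, m = A ++ s ∧ IsPrime A ∧ IsMotzkin s := by
  obtain ⟨x, r, rfl⟩ := List.exists_cons_of_ne_nil hne
  have hA : ∀ A s, x :: r = A ++ s → IsPrime A → IsMotzkin s := fun A s h hA =>
    (IsMotzkin.of_append (h ▸ hm) hA.isMotzkin.1).2
  cases x with
  | F => exact ⟨[F], r, rfl, IsPrime.flat, hA _ _ rfl IsPrime.flat⟩
  | D => simpa using hm.2 [D] (by simp)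
  | U =>
    obtain ⟨b, s, rfl, hbal, hnn⟩ := exists_eq_append_cons_D_of_descent 0 r
      ⟨r, List.prefix_refl r, by have := hm.1; have := counts_cons_U r; omega⟩
    have hb : IsPrime (U :: (b ++ [D])) := IsPrime.up ⟨hbal.symm, hnn⟩
    exact ⟨_, s, by simp, hb, hA _ _ (by simp) hb⟩

theorem exists_eq_append_prime {m : List Step} (hm : IsMotzkin m) (hne : m ≠ []) :
    ∃ y A, m = y ++ A ∧ IsMotzkin y ∧ IsPrime A := by
  obtain ⟨A, s, rfl, hA, hs⟩ := hm.exists_eq_prime_append hne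
  rcases eq_or_ne s [] with rfl | hsne
  · exact ⟨[], A, by simp, nil, hA⟩
  have : s.length < (A ++ s).length := by simp [List.length_pos_iff.2 hA.ne_nil]
  obtain ⟨y, A', rfl, hy, hA'⟩ := exists_eq_append_prime hs hsne
  exact ⟨A ++ y, A', by simp, hA.isMotzkin.append hy, hA'⟩
termination_by m.length

end IsMotzkin

section Height

variable {w x y : List Step}

theorem height_le_iff {k : ℕ} :
    height w ≤ k ↔ ∀ p, p <+: w → p.count U - p.count D ≤ k := by
  refine ⟨fun h p hp => le_trans ?_ h, fun h => List.max_le_of_forall_le _ k ?_⟩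
  · exact List.le_max_of_le (List.mem_map.2 ⟨p, (List.mem_inits _ _).2 hp, rfl⟩) le_rfl
  · simp only [List.mem_map, List.mem_inits]
    rintro _ ⟨p, hp, rfl⟩
    exact h p hp

theorem le_height {p : List Step} (hp : p <+: w) : p.count U - p.count D ≤ height w :=
  height_le_iff.1 le_rfl p hp

theorem exists_prefix_height_eq (w : List Step) :
    ∃ p, p <+: w ∧ height w = p.count U - p.count D := by
  have hne : w.inits.map (fun p => p.count U - p.count D) ≠ [] :=
    List.ne_nil_of_mem (List.mem_map_of_mem ((List.mem_inits _ _).2 List.nil_prefix))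
  obtain ⟨p, hp, he⟩ := List.mem_map.1 (List.maximum_mem (List.foldr_max_of_ne_nil hne).symm)
  exact ⟨p, (List.mem_inits _ _).1 hp, he.symm⟩

theorem height_mono (h : x <+: w) : height x ≤ height w :=
  height_le_iff.2 fun _ hp => le_height (hp.trans h)

@[simp] theorem height_nil : height [] = 0 := rfl

@[simp] theorem height_cons_U (w : List Step) : height (U :: w) = height w + 1 := by
  refine le_antisymm (height_le_iff.2 fun p hp => ?_) ?_
  · rcases List.prefix_cons_iff.1 hp with rfl | ⟨q, rfl, hq⟩
    · simp
    · have := le_height hq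
      have := counts_cons_U q
      omega
  · obtain ⟨p, hp, hw⟩ := exists_prefix_height_eq w
    rcases Nat.eq_zero_or_pos (height w) with h0 | hpos
    · simpa [h0] using le_height (w := U :: w) (List.prefix_cons_iff.2 (Or.inr ⟨[], rfl, by simp⟩))
    · have := le_height (w := U :: w) (List.prefix_cons_iff.2 (Or.inr ⟨p, rfl, hp⟩))
      have := counts_cons_U p
      omega

@[simp] theorem height_append_D (w : List Step) : height (w ++ [D]) = height w := by
  refine le_antisymm (height_le_iff.2 fun p hp => ?_) (height_mono (List.prefix_append w [D]))
  rcases List.prefix_append_iff.1 hp with hp | ⟨q, hq, rfl⟩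
  · exact le_height hp
  · have := le_height (List.prefix_refl w)
    rcases List.prefix_cons_iff.1 hq with rfl | ⟨s, rfl, hs⟩
    · simpa using this
    · obtain rfl := List.prefix_nil.1 hs
      have hU : (w ++ [D]).count U = w.count U := by simp
      have hD : (w ++ [D]).count D = w.count D + 1 := by simp
      omega

theorem height_append (hx : x.count U = x.count D) :
    height (x ++ y) = max (height x) (height y) := by
  refine le_antisymm (height_le_iff.2 fun p hp => ?_)
    (max_le (height_mono (List.prefix_append x y)) (height_le_iff.2 fun q hq => ?_))
  · rcases List.prefix_append_iff.1 hp with hp | ⟨q, hq, rfl⟩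
    · exact le_max_of_le_left (le_height hp)
    · have := le_height hq
      simp only [List.count_append]
      omega
  · have := le_height ((List.prefix_append_right_inj x).2 hq)
    simp only [List.count_append] at this
    omega

end Height

def doubleStep : Step → List Step
  | U => [U, U]
  | D => [D, D]
  | F => [U, D]

/-- The height of `φ⁻¹(m)` (`Phi.height_eq_rank`), computed from `m` alone. -/
def rank (m : List Step) : ℕ := height (m.flatMap doubleStep)

section Rank

variable {x y : List Step}

theorem count_flatMap_doubleStep (m : List Step) :
    (m.flatMap doubleStep).count U = 2 * m.count U + m.count F ∧
      (m.flatMap doubleStep).count D = 2 * m.count D + m.count F := by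
  induction m with
  | nil => simp
  | cons s m ih =>
    cases s <;> simp only [List.flatMap_cons, doubleStep, List.cons_append, List.nil_append,
      List.count_cons_self, List.count_cons_of_ne, ne_eq, reduceCtorEq, not_false_eq_true] <;> omega

@[simp] theorem rank_nil : rank [] = 0 := rfl

@[simp] theorem rank_F : rank [F] = 1 := rfl

@[simp] theorem rank_wrap (b : List Step) : rank (U :: (b ++ [D])) = rank b + 2 := by
  have : (U :: (b ++ [D])).flatMap doubleStep = U :: U :: (b.flatMap doubleStep ++ [D] ++ [D]) := by
    simp [doubleStep]
  rw [rank, this, height_cons_U, height_cons_U, height_append_D, height_append_D, rank]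

theorem rank_append (hx : x.count U = x.count D) : rank (x ++ y) = max (rank x) (rank y) := by
  have := count_flatMap_doubleStep x
  rw [rank, List.flatMap_append, height_append (by omega), rank, rank]

end Rank

def LastPrimeAbove (t : ℕ) (a : List Step) : Prop :=
  ∀ y A, a = y ++ A → y.count U = y.count D → IsPrime A → t < rank A

section Split

variable {t : ℕ} {a a' c c' : List Step}

theorem lastPrimeAbove_nil : LastPrimeAbove t [] := fun _ _ h _ hA =>
  absurd (List.append_eq_nil_iff.1 h.symm).2 hA.ne_nil

theorem lastPrimeAbove_append_prime_iff {y A : List Step} (hy : y.count U = y.count D)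
    (hA : IsPrime A) : LastPrimeAbove t (y ++ A) ↔ t < rank A := by
  refine ⟨fun h => h y A rfl hy hA, fun h y' A' he hy' hA' => ?_⟩
  obtain ⟨-, rfl⟩ := hA.append_prime_inj hA' hy hy' he
  exact h

theorem IsMotzkin.exists_split {x : List Step} (hx : IsMotzkin x) (t : ℕ) :
    ∃ a c, x = a ++ c ∧ IsMotzkin a ∧ IsMotzkin c ∧ LastPrimeAbove t a ∧ rank c ≤ t := by
  rcases eq_or_ne x [] with rfl | hne
  · exact ⟨[], [], rfl, IsMotzkin.nil, IsMotzkin.nil, lastPrimeAbove_nil, by simp⟩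
  obtain ⟨y, A, rfl, hy, hA⟩ := hx.exists_eq_append_prime hne
  by_cases hlt : t < rank A
  · exact ⟨y ++ A, [], by simp, hx, IsMotzkin.nil,
      (lastPrimeAbove_append_prime_iff hy.1 hA).2 hlt, by simp⟩
  have : y.length < (y ++ A).length := by simp [List.length_pos_iff.2 hA.ne_nil]
  obtain ⟨a, c, rfl, ha, hc, hla, hct⟩ := IsMotzkin.exists_split hy t
  refine ⟨a, c ++ A, by simp, ha, hc.append hA.isMotzkin, hla, ?_⟩
  rw [rank_append hc.1]
  omega
termination_by x.length

theorem eq_nil_of_lastPrimeAbove {s : List Step} (ha : IsMotzkin a) (has : IsMotzkin (a ++ s))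
    (hl : LastPrimeAbove t (a ++ s)) (hc : rank (s ++ c) ≤ t) : s = [] := by
  by_contra hne
  obtain ⟨u, A, rfl, hu, hA⟩ := (has.of_append ha.1).2.exists_eq_append_prime hne
  have hlt := hl (a ++ u) A (by simp) (by simp [List.count_append, ha.1, hu.1]) hA
  rw [List.append_assoc, rank_append hu.1, rank_append hA.isMotzkin.1] at hc
  omega

theorem eq_of_lastPrimeAbove (h : a ++ c = a' ++ c') (ha : IsMotzkin a) (ha' : IsMotzkin a')
    (hl : LastPrimeAbove t a) (hl' : LastPrimeAbove t a') (hc : rank c ≤ t)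
    (hc' : rank c' ≤ t) : a = a' ∧ c = c' := by
  rcases List.append_eq_append_iff.1 h with ⟨s, rfl, rfl⟩ | ⟨s, rfl, rfl⟩
  · obtain rfl := eq_nil_of_lastPrimeAbove ha ha' hl' hc
    simp
  · obtain rfl := eq_nil_of_lastPrimeAbove ha' ha hl hc'
    simp

end Split

section DH

variable {t q : ℕ} {w x i β γ : List Step}

theorem cons_append_D_append (a b : List Step) :
    U :: (a ++ [D] ++ b) = U :: (a ++ [D]) ++ b := by simp

theorem DH.isMotzkin (h : DH w) : IsMotzkin w := by
  induction h with
  | nil => exact IsMotzkin.nil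
  | cons a b _ _ _ iha ihb => exact iha.wrap_append ihb

theorem dh_cons_iff (hβ : IsMotzkin β) :
    DH (U :: (β ++ [D] ++ γ)) ↔ DH β ∧ DH γ ∧ height γ ≤ height β + 1 := by
  refine ⟨fun h => ?_, fun ⟨hβ', hγ, hh⟩ => DH.cons β γ hβ' hγ (by simpa using hh)⟩
  generalize hw : U :: (β ++ [D] ++ γ) = w at h
  cases h with
  | nil => simp at hw
  | cons a b ha hb hh =>
    rw [cons_append_D_append, cons_append_D_append] at hw
    obtain ⟨h1, rfl⟩ := (IsPrime.up ha.isMotzkin).prime_append_inj (IsPrime.up hβ) hw.symm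
    obtain rfl : a = β := by simpa using h1
    exact ⟨ha, hb, by simpa using hh⟩

theorem DH.exists_eq_append_component (h : DH w) (hne : w ≠ []) :
    ∃ x i, w = x ++ U :: (i ++ [D]) ∧ DH x ∧ DH i := by
  induction h with
  | nil => exact absurd rfl hne
  | cons a b ha hb hh _ ihb =>
    rcases eq_or_ne b [] with rfl | hbne
    · exact ⟨[], a, by simp, DH.nil, ha⟩
    obtain ⟨x, i, rfl, hx, hi⟩ := ihb hbne
    refine ⟨U :: (a ++ [D] ++ x), i, by simp, DH.cons a x ha hx ?_, hi⟩
    exact (height_mono (List.prefix_append x _)).trans hh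

/-- Paths in `D^{h,≥}` whose components `U a D` all have height `height a + 1` at least `t`. -/
inductive DHge (t : ℕ) : List Step → Prop
  | nil : DHge t []
  | cons {a b : List Step} : DH a → DHge t b → height b ≤ height a + 1 → t ≤ height a + 1 →
      DHge t (U :: (a ++ [D] ++ b))

theorem DHge.dh (h : DHge t w) : DH w := by
  induction h with
  | nil => exact DH.nil
  | cons ha _ hh _ ihb => exact DH.cons _ _ ha ihb (by simpa using hh)

theorem DH.dhge (h : DH w) (ht : t ≤ 1) : DHge t w := by
  induction h with
  | nil => exact DHge.nil
  | cons a b ha _ hh _ ihb => exact DHge.cons ha ihb (by simpa using hh) (by omega)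

theorem dhge_append_component_iff (hx : x.count U = x.count D) (hi : IsMotzkin i) :
    DHge q (x ++ U :: (i ++ [D])) ↔ DHge (height i + 1) x ∧ DH i ∧ q ≤ height i + 1 := by
  constructor
  · generalize hw : x ++ U :: (i ++ [D]) = w
    intro h
    induction h generalizing x with
    | nil => simp at hw
    | @cons a b ha hb hh hq ih =>
      rw [cons_append_D_append] at hw
      rcases (IsPrime.up ha.isMotzkin).eq_nil_or_exists_of_append_eq hx hw.symm with
        rfl | ⟨x₂, rfl, rfl⟩
      · obtain ⟨h1, rfl⟩ := (IsPrime.up hi).prime_append_inj (IsPrime.up ha.isMotzkin)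
          (by simpa using hw)
        obtain rfl : i = a := by simpa using h1
        exact ⟨DHge.nil, ha, hq⟩
      · have hx₂ : x₂.count U = x₂.count D := by
          have := (IsPrime.up ha.isMotzkin).isMotzkin.1
          simp only [List.count_append] at hx
          omega
        obtain ⟨h1, h2, h3⟩ := ih hx₂ rfl
        rw [height_append hx₂, height_cons_U, height_append_D] at hh
        rw [← cons_append_D_append]
        exact ⟨DHge.cons ha h1 (by omega) (by omega), h2, h3⟩
  · rintro ⟨hx', hi', hq⟩
    induction hx' with
    | nil => simpa using DHge.cons hi' DHge.nil (by simp) hq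
    | @cons a b ha hb hh ht ih =>
      have hbal : b.count U = b.count D := hb.dh.isMotzkin.1
      rw [cons_append_D_append, List.append_assoc, ← cons_append_D_append]
      refine DHge.cons ha (ih hbal) ?_ (by omega)
      rw [height_append hbal, height_cons_U, height_append_D]
      omega

theorem height_cons_append_D_append (hβ : β.count U = β.count D) :
    height (U :: (β ++ [D] ++ γ)) = max (height β + 1) (height γ) := by
  rw [cons_append_D_append, height_append (by simp [hβ])]
  simp

theorem dh_iff_dhge_zero : DH w ↔ DHge 0 w :=
  ⟨fun h => h.dhge (Nat.zero_le 1), DHge.dh⟩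

theorem dh_append_component_iff (hx : x.count U = x.count D) (hi : IsMotzkin i) :
    DH (x ++ U :: (i ++ [D])) ↔ DHge (height i + 1) x ∧ DH i := by
  rw [dh_iff_dhge_zero, dhge_append_component_iff hx hi]
  simp

theorem dh_append_block_iff (hx : x.count U = x.count D) (hβ : IsMotzkin β)
    (hγ : IsMotzkin γ) :
    DH (x ++ U :: (U :: (β ++ [D] ++ γ) ++ [D])) ↔
      DHge (height β + 2) x ∧ DH β ∧ DH γ ∧ height γ ≤ height β + 1 := by
  rw [dh_append_component_iff hx (hβ.wrap_append hγ), dh_cons_iff hβ,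
    height_cons_append_D_append hβ.1]
  refine ⟨fun ⟨h1, h2, h3, h4⟩ => ⟨?_, h2, h3, h4⟩, fun ⟨h1, h2, h3, h4⟩ => ⟨?_, h2, h3, h4⟩⟩
  · rwa [max_eq_left h4] at h1
  · rwa [max_eq_left h4]

end DH

theorem append_UU_eq_append_component (α β γ : List Step) :
    α ++ [U, U] ++ β ++ [D] ++ γ ++ [D] = α ++ U :: (U :: (β ++ [D] ++ γ) ++ [D]) := by
  simp

theorem append_F_ne_append_wrap {y y' b : List Step} : y ++ [F] ≠ y' ++ U :: (b ++ [D]) :=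
  fun h => by simpa using congrArg List.reverse h

namespace Phi

variable {P P' m m' : List Step}

theorem isMotzkin (h : Phi P m) : IsMotzkin m := by
  induction h with
  | nil => exact IsMotzkin.nil
  | flat _ _ _ _ ih => exact ih.append IsMotzkin.flat
  | up _ _ _ _ _ _ _ _ _ _ _ _ iha ihb ihc => exact (iha.append ihc).append ihb.wrap

theorem length_eq (h : Phi P m) : P.length = 2 * m.length := by
  induction h with
  | nil => rfl
  | flat _ _ _ _ ih =>
    simp only [List.length_append, List.length_cons, List.length_nil, ih]
    omega
  | up _ _ _ _ _ _ _ _ _ _ _ _ iha ihb ihc =>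
    simp only [List.length_append, List.length_cons, List.length_nil, iha, ihb, ihc]
    omega

theorem up' {α β γ a b c : List Step} (hα : DH α) (hβ : DH β) (hγ : DH γ) (ha : Phi α a)
    (hb : Phi β b) (hc : Phi γ c) :
    Phi (α ++ U :: (U :: (β ++ [D] ++ γ) ++ [D])) (a ++ c ++ U :: (b ++ [D])) :=
  append_UU_eq_append_component α β γ ▸ Phi.up α β γ a b c hα hβ hγ ha hb hc

theorem cases_eq (h : Phi P m) :
    (P = [] ∧ m = []) ∨
    (∃ α a, P = α ++ [U, D] ∧ m = a ++ [F] ∧ DH α ∧ Phi α a) ∨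
    (∃ α β γ a b c, P = α ++ U :: (U :: (β ++ [D] ++ γ) ++ [D]) ∧
      m = a ++ c ++ U :: (b ++ [D]) ∧ DH α ∧ DH β ∧ DH γ ∧ Phi α a ∧ Phi β b ∧ Phi γ c) := by
  cases h with
  | nil => exact Or.inl ⟨rfl, rfl⟩
  | flat α a hα ha => exact Or.inr (Or.inl ⟨α, a, rfl, rfl, hα, ha⟩)
  | up α β γ a b c hα hβ hγ ha hb hc =>
    exact Or.inr (Or.inr ⟨α, β, γ, a, b, c, append_UU_eq_append_component α β γ, rfl,
      hα, hβ, hγ, ha, hb, hc⟩)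

theorem unique (h : Phi P m) (h' : Phi P m') : m = m' := by
  induction h generalizing m' with
  | nil =>
    rcases h'.cases_eq with ⟨-, rfl⟩ | ⟨_, _, hP, -⟩ | ⟨_, _, _, _, _, _, hP, -⟩
    · rfl
    all_goals simp at hP
  | flat α a hα _ ih =>
    rcases h'.cases_eq with ⟨hP, -⟩ | ⟨α', a', hP, rfl, -, ha'⟩ |
        ⟨α', β', γ', -, -, -, hP, -, hα', hβ', hγ', -⟩
    · simp at hP
    · obtain rfl := List.append_cancel_right hP
      rw [ih ha']
    · have := (IsPrime.up IsMotzkin.nil).append_prime_inj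
        (IsPrime.up (hβ'.isMotzkin.wrap_append hγ'.isMotzkin)) hα.isMotzkin.1 hα'.isMotzkin.1
        (by simpa using hP)
      simp at this
  | up α β γ a b c hα hβ hγ _ _ _ iha ihb ihc =>
    rw [append_UU_eq_append_component] at h'
    rcases h'.cases_eq with ⟨hP, -⟩ | ⟨α', a', hP, -, hα', -⟩ |
        ⟨α', β', γ', a', b', c', hP, rfl, hα', hβ', hγ', ha', hb', hc'⟩
    · simp at hP
    · have := (IsPrime.up (hβ.isMotzkin.wrap_append hγ.isMotzkin)).append_prime_inj
        (IsPrime.up IsMotzkin.nil) hα.isMotzkin.1 hα'.isMotzkin.1 (by simpa using hP)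
      simp at this
    · obtain ⟨rfl, hi⟩ := (IsPrime.up (hβ.isMotzkin.wrap_append hγ.isMotzkin)).append_prime_inj
        (IsPrime.up (hβ'.isMotzkin.wrap_append hγ'.isMotzkin)) hα.isMotzkin.1 hα'.isMotzkin.1 hP
      obtain ⟨h1, rfl⟩ := (IsPrime.up hβ.isMotzkin).prime_append_inj (IsPrime.up hβ'.isMotzkin)
        (List.append_cancel_right (List.cons.inj hi).2)
      obtain rfl : β = β' := by simpa using h1
      rw [iha ha', ihb hb', ihc hc']

theorem height_eq_rank (h : Phi P m) (hP : DH P) : height P = rank m := by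
  induction h with
  | nil => rfl
  | flat α a hα ha ih =>
    rw [show α ++ [U, D] = α ++ U :: ([] ++ [D]) from rfl, height_append hα.isMotzkin.1,
      rank_append ha.isMotzkin.1, ih hα]
    rfl
  | up α β γ a b c hα hβ hγ ha hb hc iha ihb ihc =>
    rw [append_UU_eq_append_component] at hP ⊢
    obtain ⟨-, -, -, hγβ⟩ := (dh_append_block_iff hα.isMotzkin.1 hβ.isMotzkin hγ.isMotzkin).1 hP
    rw [height_append hα.isMotzkin.1, height_cons_U, height_append_D,
      height_cons_append_D_append hβ.isMotzkin.1, rank_append (ha.isMotzkin.append hc.isMotzkin).1,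
      rank_append ha.isMotzkin.1, rank_wrap, iha hα, ihb hβ, ihc hγ]
    rw [ihb hβ, ihc hγ] at hγβ
    omega

theorem dhge_iff (h : Phi P m) (hP : DH P) (t : ℕ) : DHge (t + 1) P ↔ LastPrimeAbove t m := by
  cases h with
  | nil => exact iff_of_true DHge.nil lastPrimeAbove_nil
  | flat α a hα ha =>
    rw [show α ++ [U, D] = α ++ U :: ([] ++ [D]) from rfl] at hP ⊢
    obtain ⟨hge, -⟩ := (dh_append_component_iff hα.isMotzkin.1 IsMotzkin.nil).1 hP
    rw [lastPrimeAbove_append_prime_iff ha.isMotzkin.1 IsPrime.flat, rank_F,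
      dhge_append_component_iff hα.isMotzkin.1 IsMotzkin.nil]
    simp only [height_nil, zero_add] at hge ⊢
    simp only [hge, DH.nil, true_and]
    omega
  | up α β γ a b c hα hβ hγ ha hb hc =>
    rw [append_UU_eq_append_component] at hP ⊢
    obtain ⟨-, -, -, hγβ⟩ := (dh_append_block_iff hα.isMotzkin.1 hβ.isMotzkin hγ.isMotzkin).1 hP
    obtain ⟨hge, hi⟩ :=
      (dh_append_component_iff hα.isMotzkin.1 (hβ.isMotzkin.wrap_append hγ.isMotzkin)).1 hP
    rw [lastPrimeAbove_append_prime_iff (ha.isMotzkin.append hc.isMotzkin).1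
        (IsPrime.up hb.isMotzkin), rank_wrap, ← hb.height_eq_rank hβ,
      dhge_append_component_iff hα.isMotzkin.1 (hβ.isMotzkin.wrap_append hγ.isMotzkin)]
    simp only [hge, hi, true_and]
    rw [height_cons_append_D_append hβ.isMotzkin.1]
    omega

theorem left_unique {P P' m : List Step} (h : Phi P m) (h' : Phi P' m) (hP : DH P)
    (hP' : DH P') : P = P' := by
  rcases h.cases_eq with ⟨rfl, rfl⟩ | ⟨α, a, rfl, rfl, hα, ha⟩ |
      ⟨α, β, γ, a, b, c, rfl, rfl, hα, hβ, hγ, ha, hb, hc⟩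
  · rcases h'.cases_eq with ⟨rfl, -⟩ | ⟨_, _, -, hm, -⟩ | ⟨_, _, _, _, _, _, -, hm, -⟩
    · rfl
    all_goals simp at hm
  · rcases h'.cases_eq with ⟨-, hm⟩ | ⟨α', a', rfl, hm, hα', ha'⟩ |
        ⟨_, _, _, _, _, _, -, hm, -⟩
    · simp at hm
    · obtain rfl := List.append_cancel_right hm
      rw [left_unique ha ha' hα hα']
    · exact (append_F_ne_append_wrap hm).elim
  · rcases h'.cases_eq with ⟨-, hm⟩ | ⟨_, _, -, hm, -⟩ |
        ⟨α', β', γ', a', b', c', rfl, hm, hα', hβ', hγ', ha', hb', hc'⟩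
    · simp at hm
    · exact (append_F_ne_append_wrap hm.symm).elim
    obtain ⟨hac, hbb⟩ := (IsPrime.up hb.isMotzkin).append_prime_inj (IsPrime.up hb'.isMotzkin)
      (ha.isMotzkin.append hc.isMotzkin).1 (ha'.isMotzkin.append hc'.isMotzkin).1 hm
    obtain rfl : b = b' := by simpa using hbb
    obtain rfl := left_unique hb hb' hβ hβ'
    obtain ⟨hgeα, -, -, hγβ⟩ :=
      (dh_append_block_iff hα.isMotzkin.1 hβ.isMotzkin hγ.isMotzkin).1 hP
    obtain ⟨hgeα', -, -, hγβ'⟩ :=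
      (dh_append_block_iff hα'.isMotzkin.1 hβ.isMotzkin hγ'.isMotzkin).1 hP'
    obtain ⟨rfl, rfl⟩ := eq_of_lastPrimeAbove hac ha.isMotzkin ha'.isMotzkin
      ((ha.dhge_iff hα _).1 hgeα) ((ha'.dhge_iff hα' _).1 hgeα')
      (hc.height_eq_rank hγ ▸ hγβ) (hc'.height_eq_rank hγ' ▸ hγβ')
    rw [left_unique ha ha' hα hα', left_unique hc hc' hγ hγ']
termination_by m.length

end Phi

theorem DH.exists_phi {P : List Step} (h : DH P) : ∃ m, Phi P m := by
  rcases eq_or_ne P [] with rfl | hne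
  · exact ⟨[], Phi.nil⟩
  obtain ⟨α, i, rfl, hα, hi⟩ := h.exists_eq_append_component hne
  obtain ⟨a, ha⟩ := DH.exists_phi hα
  cases hi with
  | nil => exact ⟨a ++ [F], Phi.flat α a hα ha⟩
  | cons β γ hβ hγ _ =>
    obtain ⟨b, hb⟩ := DH.exists_phi hβ
    obtain ⟨c, hc⟩ := DH.exists_phi hγ
    exact ⟨_, Phi.up' hα hβ hγ ha hb hc⟩
termination_by P.length

theorem IsMotzkin.exists_phi {m : List Step} (hm : IsMotzkin m) : ∃ P, DH P ∧ Phi P m := by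
  rcases eq_or_ne m [] with rfl | hne
  · exact ⟨[], DH.nil, Phi.nil⟩
  obtain ⟨y, A, rfl, hy, hA⟩ := hm.exists_eq_append_prime hne
  cases hA with
  | flat =>
    obtain ⟨P, hP, hPy⟩ := IsMotzkin.exists_phi hy
    exact ⟨P ++ [U, D],
      (dh_append_component_iff hP.isMotzkin.1 IsMotzkin.nil).2 ⟨hP.dhge le_rfl, DH.nil⟩,
      Phi.flat P y hP hPy⟩
  | @up b hb =>
    obtain ⟨β, hβ, hβb⟩ := IsMotzkin.exists_phi hb
    obtain ⟨a, c, rfl, ha, hc, hla, hct⟩ := hy.exists_split (height β + 1)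
    obtain ⟨α, hα, hαa⟩ := IsMotzkin.exists_phi ha
    obtain ⟨γ, hγ, hγc⟩ := IsMotzkin.exists_phi hc
    refine ⟨_, ?_, Phi.up' hα hβ hγ hαa hβb hγc⟩
    exact (dh_append_block_iff hα.isMotzkin.1 hβ.isMotzkin hγ.isMotzkin).2
      ⟨(hαa.dhge_iff hα _).2 hla, hβ, hγ, hγc.height_eq_rank hγ ▸ hct⟩
termination_by m.length

/-- φ is a well-defined bijection from D_n^{h,≥} onto the Motzkin paths of length n. -/
theorem stmt9 (n : ℕ) :
    (∀ P : List Step, DH P → P.length = 2 * n → ∃! m : List Step, Phi P m) ∧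
    (∀ P m : List Step, DH P → P.length = 2 * n → Phi P m →
      IsMotzkin m ∧ m.length = n) ∧
    (∀ m : List Step, IsMotzkin m → m.length = n →
      ∃! P : List Step, DH P ∧ P.length = 2 * n ∧ Phi P m) := by
  refine ⟨fun P hP _ => ?_, fun P m _ hlen h => ?_, fun m hm hlen => ?_⟩
  · obtain ⟨m, hm⟩ := hP.exists_phi
    exact ⟨m, hm, fun m' hm' => hm'.unique hm⟩
  · exact ⟨h.isMotzkin, by have := h.length_eq; omega⟩
  · obtain ⟨P, hP, hPm⟩ := hm.exists_phi
    exact ⟨P, ⟨hP, by rw [hPm.length_eq, hlen], hPm⟩,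
      fun P' ⟨hP', _, hP'm⟩ => hP'm.left_unique hPm hP' hP⟩
end

section
/- For every n ≥ 0 and every P ∈ D_n^{h,≥}, the number of occurrences of the factor UD in P equals the number of F steps in φ(P) plus the number of occurrences of the factor UD in φ(P). -/
open Step

/-!
An occurrence of `UD` can never straddle a concatenation of two pieces that neither begin with
`D` nor end with `U`, and both sides of every defining equation of φ are concatenations of such
pieces. So `#UD` is additive along the recursion, and the two sides of each equation differ only
at the innermost peaks: `αUD` gains one `UD` where `φ(α)F` gains one `F`, and `UUβD` has the extra
peak `UD` exactly when `β = ε`, i.e. exactly when `Uφ(β)D` does.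
-/

section

variable {α : Type*} [BEq α] [LawfulBEq α]

lemma isPrefixOf_singleton_cons (s a : α) (w : List α) :
    [s].isPrefixOf (a :: w) = true ↔ a = s := by
  simp [List.isPrefixOf, @eq_comm _ s]

lemma isPrefixOf_pair_cons (s t a : α) (w : List α) :
    [s, t].isPrefixOf (a :: w) = true ↔ a = s ∧ w.head? = some t := by
  cases w <;> simp [List.isPrefixOf, @eq_comm _ s, @eq_comm _ t]

end

lemma countFactor_cons (p : List Step) (a : Step) (w : List Step) :
    countFactor p (a :: w) = countFactor p w + if p.isPrefixOf (a :: w) then 1 else 0 := by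
  simp only [countFactor, List.tails_cons, List.countP_cons]

lemma countFactor_singleton (s : Step) (w : List Step) : countFactor [s] w = w.count s := by
  induction w with
  | nil => rfl
  | cons a w ih =>
    simp only [countFactor_cons, ih, List.count_cons, isPrefixOf_singleton_cons, beq_iff_eq]

lemma countFactor_pair_append (s t : Step) (x y : List Step) :
    countFactor [s, t] (x ++ y) = countFactor [s, t] x + countFactor [s, t] y +
      if x.getLast? = some s ∧ y.head? = some t then 1 else 0 := by
  induction x with
  | nil => simp [countFactor]
  | cons a x ih =>
    simp only [List.cons_append, countFactor_cons, ih, isPrefixOf_pair_cons]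
    cases x with
    | nil => simp [countFactor]
    | cons b x =>
      simp only [List.cons_append, List.head?_cons, Option.some.injEq, List.getLast?_cons_cons]
      omega

def WellEnded (w : List Step) : Prop :=
  w.head? ≠ some D ∧ w.getLast? ≠ some U

namespace WellEnded

lemma nil : WellEnded [] := by simp [WellEnded]

lemma flat : WellEnded [F] := by simp [WellEnded]

lemma wrap (w : List Step) : WellEnded (U :: (w ++ [D])) := by
  refine ⟨by simp, ?_⟩
  rw [← List.cons_append, List.getLast?_concat]
  simp

lemma append {x y : List Step} (hx : WellEnded x) (hy : WellEnded y) : WellEnded (x ++ y) := by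
  refine ⟨?_, ?_⟩
  · rcases x with _ | ⟨a, x⟩
    · exact hy.1
    · exact hx.1
  · rw [List.getLast?_append]
    rcases h : y.getLast? with _ | c
    · simpa using hx.2
    · simpa [h] using hy.2

end WellEnded

lemma countFactor_UD_append {x y : List Step} (hx : x.getLast? ≠ some U) :
    countFactor [U, D] (x ++ y) = countFactor [U, D] x + countFactor [U, D] y := by
  simp [countFactor_pair_append, hx]

lemma countFactor_UD_wrap {w : List Step} (hw : WellEnded w) :
    countFactor [U, D] (U :: (w ++ [D])) = countFactor [U, D] w + if w = [] then 1 else 0 := by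
  rw [← List.singleton_append (l := w ++ [D]), countFactor_pair_append,
    countFactor_UD_append hw.2]
  rcases w with _ | ⟨a, w⟩
  · simp [countFactor]
  · simpa [countFactor, isPrefixOf_pair_cons] using hw.1

namespace Phi

variable {P m : List Step}

lemma eq_nil_iff (h : Phi P m) : P = [] ↔ m = [] := by
  cases h <;> simp

lemma up_source_eq (α β γ : List Step) :
    α ++ [U, U] ++ β ++ [D] ++ γ ++ [D] = α ++ U :: ((U :: (β ++ [D])) ++ γ ++ [D]) := by
  simp

lemma wellEnded (h : Phi P m) : WellEnded P ∧ WellEnded m := by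
  induction h with
  | nil => exact ⟨.nil, .nil⟩
  | flat α a _ _ ih => exact ⟨ih.1.append (.wrap []), ih.2.append .flat⟩
  | up α β γ a b c _ _ _ _ _ _ ihα _ ihγ =>
    rw [up_source_eq]
    exact ⟨ihα.1.append (.wrap _), (ihα.2.append ihγ.2).append (.wrap b)⟩

theorem countFactor_UD (h : Phi P m) :
    countFactor [U, D] P = m.count F + countFactor [U, D] m := by
  induction h with
  | nil => rfl
  | flat α a _ hφα ih =>
    rw [countFactor_UD_append hφα.wellEnded.1.2, countFactor_UD_append hφα.wellEnded.2.2, ih,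
      List.count_append, List.count_singleton_self]
    have hpeak : countFactor [U, D] [U, D] = 1 := rfl
    have hflat : countFactor [U, D] [F] = 0 := rfl
    omega
  | up α β γ a b c _ _ _ hφα hφβ hφγ ihα ihβ ihγ =>
    obtain ⟨hα, ha⟩ := hφα.wellEnded
    obtain ⟨hβ, hb⟩ := hφβ.wellEnded
    obtain ⟨hγ, hc⟩ := hφγ.wellEnded
    have hpeak : (if β = [] then 1 else 0) = if b = [] then 1 else 0 := by
      simp only [hφβ.eq_nil_iff]
    rw [up_source_eq, countFactor_UD_append hα.2,
      countFactor_UD_wrap ((WellEnded.wrap β).append hγ), countFactor_UD_append (WellEnded.wrap β).2,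
      countFactor_UD_wrap hβ, countFactor_UD_append (ha.append hc).2, countFactor_UD_append ha.2,
      countFactor_UD_wrap hb, ihα, ihβ, ihγ, hpeak]
    have hcount : (a ++ c ++ U :: (b ++ [D])).count F = a.count F + c.count F + b.count F := by
      simp [List.count_append, add_assoc]
    have hne : U :: (β ++ [D]) ++ γ ≠ [] := by simp
    rw [if_neg hne, hcount]
    omega

end Phi

theorem stmt10_general (P m : List Step)
    (hphi : Phi P m) :
    countFactor [Step.U, Step.D] P =
      countFactor [Step.F] m + countFactor [Step.U, Step.D] m := by
  rw [countFactor_singleton]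
  exact hphi.countFactor_UD

/-- φ transports the statistic UD: #UD(P) = #F(φP) + #UD(φP). -/
theorem stmt10 (n : ℕ) (P m : List Step) (hP : DH P) (hlen : P.length = 2 * n)
    (hphi : Phi P m) :
    countFactor [Step.U, Step.D] P =
      countFactor [Step.F] m + countFactor [Step.U, Step.D] m :=
  stmt10_general P m hphi
end

section
/- For every n ≥ 0 and every P ∈ D_n^{h,≥}, the number of occurrences of the factor DU in P equals the total number of occurrences of the factors FF, FU, DF and DU in φ(P). -/
open Step

/-! The DU-factors of `P` are its valleys, and the four factors `FF, FU, DF, DU` are exactly the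
two-letter factors `xy` of a Motzkin path with `x ≠ U` and `y ≠ D`. Both statistics are additive
over concatenation up to one boundary term, so it suffices to follow the boundaries through the
two recursive clauses of φ. In `φ(αUD) = φ(α)F` the valley at the end of a nonempty `α` becomes
the factor (last letter of `φ(α)`)`F`; in `φ(αUUβDγD) = φ(α)φ(γ)Uφ(β)D` the valleys at the end of
a nonempty `α` and at the start of a nonempty `γ` become the factors at the junctions of `φ(α)`,
`φ(γ)` and `U`. This works because a nonempty Dyck path starts with `U` and ends with `D`, while a
nonempty image `φ(P)` never starts with `D` and never ends with `U`. -/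

section CountAdj

variable {α : Type*}

def countAdj (r : α → α → Prop) [DecidableRel r] : List α → ℕ
  | a :: b :: l => (if r a b then 1 else 0) + countAdj r (b :: l)
  | _ => 0

variable (r s : α → α → Prop) [DecidableRel r] [DecidableRel s]

@[simp]
lemma countAdj_nil : countAdj r [] = 0 := rfl

@[simp]
lemma countAdj_singleton (a : α) : countAdj r [a] = 0 := rfl

@[simp]
lemma countAdj_cons_cons (a b : α) (l : List α) :
    countAdj r (a :: b :: l) = (if r a b then 1 else 0) + countAdj r (b :: l) := rfl

lemma countAdj_append (x y : List α) :
    countAdj r (x ++ y) =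
      countAdj r x + countAdj r y + countAdj r (x.getLast?.toList ++ y.head?.toList) := by
  induction x with
  | nil => cases y <;> simp
  | cons a x ih =>
    cases x with
    | nil => cases y <;> simp; omega
    | cons b l =>
      rw [List.cons_append, List.cons_append, countAdj_cons_cons, ← List.cons_append, ih,
        countAdj_cons_cons, List.getLast?_cons_cons]
      omega

lemma countAdj_cons (a : α) (x : List α) :
    countAdj r (a :: x) = countAdj r (a :: x.head?.toList) + countAdj r x := by
  cases x <;> simp [add_comm]

@[simp]
lemma countAdj_cons_toList (a : α) (o : Option α) :
    countAdj r (a :: o.toList) = if ∃ b ∈ o, r a b then 1 else 0 := by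
  cases o <;> simp

@[simp]
lemma countAdj_toList_append_singleton (o : Option α) (b : α) :
    countAdj r (o.toList ++ [b]) = if ∃ a ∈ o, r a b then 1 else 0 := by
  cases o <;> simp

lemma countAdj_or (hrs : ∀ a b, r a b → ¬ s a b) :
    ∀ w, countAdj (fun a b => r a b ∨ s a b) w = countAdj r w + countAdj s w
  | [] | [_] => rfl
  | a :: b :: l => by
    simp only [countAdj_cons_cons, countAdj_or hrs (b :: l)]
    have := hrs a b
    split_ifs <;> grind

end CountAdj

lemma isPrefixOf_pair (s t a b : Step) (l : List Step) :
    [s, t].isPrefixOf (a :: b :: l) ↔ a = s ∧ b = t := by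
  simp only [List.isPrefixOf, beq_iff_eq, Bool.and_true, Bool.and_eq_true]
  exact and_congr eq_comm eq_comm

lemma countFactor_pair (s t : Step) :
    ∀ w, countFactor [s, t] w = countAdj (fun a b => a = s ∧ b = t) w
  | [] => rfl
  | [_] => by simp [countFactor, List.isPrefixOf, countAdj]
  | a :: b :: l => by
    have ih := countFactor_pair s t (b :: l)
    simp only [countFactor, List.tails_cons, List.countP_cons] at ih ⊢
    simp only [ih, countAdj, isPrefixOf_pair]
    omega

section Shapes

variable {α β γ a b c : List Step}

lemma countAdj_DU_append_UD (hα : ∀ x ∈ α.getLast?, x = D) :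
    countAdj (fun x y => x = D ∧ y = U) (α ++ [U, D]) =
      countAdj (fun x y => x = D ∧ y = U) α + if α = [] then 0 else 1 := by
  rw [countAdj_append]
  obtain rfl | ⟨α, x, rfl⟩ := α.eq_nil_or_concat' <;> simp_all

lemma countAdj_DU_append_UU_D_D (hα : ∀ x ∈ α.getLast?, x = D)
    (hγ : ∀ x ∈ γ.head?, x = U) :
    countAdj (fun x y => x = D ∧ y = U) (α ++ [U, U] ++ β ++ [D] ++ γ ++ [D]) =
      countAdj (fun x y => x = D ∧ y = U) α + countAdj (fun x y => x = D ∧ y = U) β +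
        countAdj (fun x y => x = D ∧ y = U) γ + (if α = [] then 0 else 1) +
          if γ = [] then 0 else 1 := by
  rw [countAdj_append _ (α ++ [U, U] ++ β ++ [D] ++ γ) [D],
    countAdj_append _ (α ++ [U, U] ++ β ++ [D]) γ, countAdj_append _ (α ++ [U, U] ++ β) [D],
    countAdj_append _ (α ++ [U, U]) β, countAdj_append _ α [U, U]]
  obtain rfl | ⟨α, x, rfl⟩ := α.eq_nil_or_concat' <;> cases γ <;>
    simp_all [List.getLast?_cons] <;> omega

lemma countAdj_notUD_append_F (ha : ∀ x ∈ a.getLast?, x ≠ U) :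
    countAdj (fun x y => x ≠ U ∧ y ≠ D) (a ++ [F]) =
      countAdj (fun x y => x ≠ U ∧ y ≠ D) a + if a = [] then 0 else 1 := by
  rw [countAdj_append]
  obtain rfl | ⟨a, x, rfl⟩ := a.eq_nil_or_concat' <;> simp_all

lemma countAdj_notUD_append_append_U_D (ha : ∀ x ∈ a.getLast?, x ≠ U)
    (hc : ∀ x ∈ c.head?, x ≠ D) (hc' : ∀ x ∈ c.getLast?, x ≠ U) :
    countAdj (fun x y => x ≠ U ∧ y ≠ D) (a ++ c ++ U :: (b ++ [D])) =
      countAdj (fun x y => x ≠ U ∧ y ≠ D) a + countAdj (fun x y => x ≠ U ∧ y ≠ D) b +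
        countAdj (fun x y => x ≠ U ∧ y ≠ D) c + (if a = [] then 0 else 1) +
          if c = [] then 0 else 1 := by
  rw [countAdj_append _ (a ++ c), countAdj_append _ a c, countAdj_cons _ U (b ++ [D]),
    countAdj_append _ b [D]]
  obtain rfl | ⟨a, x, rfl⟩ := a.eq_nil_or_concat' <;> cases c <;>
    simp_all [List.getLast?_cons] <;> omega

end Shapes

namespace Phi

variable {P m : List Step}

lemma dyck_head? (h : Phi P m) : ∀ x ∈ P.head?, x = U := by
  induction h with
  | nil => simp
  | flat α a _ _ ih => cases α <;> simp_all
  | up α β γ a b c _ _ _ _ _ _ ih => cases α <;> simp_all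

lemma dyck_getLast? (h : Phi P m) : ∀ x ∈ P.getLast?, x = D := by
  cases h <;> simp [List.getLast?_cons]

lemma motzkin_head? (h : Phi P m) : ∀ x ∈ m.head?, x ≠ D := by
  induction h with
  | nil => simp
  | flat α a _ _ ih => cases a <;> simp_all
  | up α β γ a b c _ _ _ _ _ _ iha _ ihc => cases a <;> cases c <;> simp_all

lemma motzkin_getLast? (h : Phi P m) : ∀ x ∈ m.getLast?, x ≠ U := by
  cases h <;> simp [List.getLast?_cons]

lemma countAdj_DU_eq_countAdj_notUD (h : Phi P m) :
    countAdj (fun x y => x = D ∧ y = U) P = countAdj (fun x y => x ≠ U ∧ y ≠ D) m := by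
  induction h with
  | nil => rfl
  | flat α a _ hφ ih =>
    rw [countAdj_DU_append_UD hφ.dyck_getLast?, countAdj_notUD_append_F hφ.motzkin_getLast?,
      ih]
    simp only [hφ.eq_nil_iff]
  | up α β γ a b c _ _ _ hα _ hγ iha ihb ihc =>
    rw [countAdj_DU_append_UU_D_D hα.dyck_getLast? hγ.dyck_head?,
      countAdj_notUD_append_append_U_D hα.motzkin_getLast? hγ.motzkin_head? hγ.motzkin_getLast?,
      iha, ihb, ihc]
    simp only [hα.eq_nil_iff, hγ.eq_nil_iff]

end Phi

theorem stmt12_general (P m : List Step) (hphi : Phi P m) :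
    countFactor [Step.D, Step.U] P =
      countFactor [Step.F, Step.F] m + countFactor [Step.F, Step.U] m +
        countFactor [Step.D, Step.F] m + countFactor [Step.D, Step.U] m := by
  simp only [countFactor_pair, hphi.countAdj_DU_eq_countAdj_notUD]
  rw [← countAdj_or, ← countAdj_or, ← countAdj_or]
  · congr
    funext x y
    cases x <;> cases y <;> simp
  all_goals grind

/-- φ transports DU: #DU(P) = #FF(φP) + #FU(φP) + #DF(φP) + #DU(φP). -/
theorem stmt12 (n : ℕ) (P m : List Step) (hP : DH P) (hlen : P.length = 2 * n)
    (hphi : Phi P m) :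
    countFactor [Step.D, Step.U] P =
      countFactor [Step.F, Step.F] m + countFactor [Step.F, Step.U] m +
        countFactor [Step.D, Step.F] m + countFactor [Step.D, Step.U] m :=
  stmt12_general P m hphi
end

section
/- For every n ≥ 0 and every P ∈ D_n^{h,≥}, the number of occurrences of the factor UUD in P equals the number of occurrences of patterns of the form U F^k D (k ≥ 1, i.e. an up step followed by one or more flat steps followed by a down step) in φ(P), plus the number of occurrences of the factor UD in φ(P). -/
open Step

/-!
Induct along the recursive definition of φ, counting on the Motzkin side the factors `U F^k D`
with `k ≥ 0`, which is the right-hand side. Dyck paths never end with `U`, and images of φ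
never begin with `F^k D` nor end with `U F^k`, so in `P = α U U β D γ D` and in
`φ P = φ α φ γ U φ β D` no occurrence straddles two pieces. Thus the new `UUD` occurrences in
`P` are one for `β = ε` and one for `β` beginning with `UD`, and the new `U F^k D` occurrence in
`φ P` is the one when `φ β` is flat, i.e. when `β = (UD)^j`. The condition `h(UαD) ≥ h(β)`
links the two: a path of `D^{h,≥}` beginning with `UD` has height at most one, so it is `(UD)^j`.
-/

theorem List.countP_tails_append {α : Type*} {q : List α → Bool} (hq : q [] = false)
    {x : List α} (y : List α) (h : ∀ t, t <:+ x → t ≠ [] → q (t ++ y) = q t) :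
    (x ++ y).tails.countP q = x.tails.countP q + y.tails.countP q := by
  induction x with
  | nil => simp [hq]
  | cons a x ih =>
    have hx : ∀ t, t <:+ x → t ≠ [] → q (t ++ y) = q t :=
      fun t ht => h t (ht.trans (List.suffix_cons a x))
    have hax := h (a :: x) List.suffix_rfl (List.cons_ne_nil a x)
    simp only [List.cons_append] at hax
    simp only [List.cons_append, List.tails_cons, List.countP_cons, ih hx, hax]
    omega

theorem List.countP_eq_add_countP {α : Type*} {p q r : α → Bool}
    (h : ∀ a, (r a).toNat = (p a).toNat + (q a).toNat) (l : List α) :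
    l.countP r = l.countP p + l.countP q := by
  induction l with
  | nil => rfl
  | cons a l ih =>
    simp only [List.countP_cons, ih]
    have := h a
    revert this
    cases p a <;> cases q a <;> cases r a <;> simp <;> omega

theorem count_U_sub_count_D_le_height {p w : List Step} (h : p <+: w) :
    p.count U - p.count D ≤ height w :=
  List.le_max_of_le' 0 (List.mem_map.mpr ⟨p, (List.mem_inits _ _).mpr h, rfl⟩) le_rfl

def isUDPower : List Step → Bool
  | [] => true
  | U :: D :: r => isUDPower r
  | _ => false

theorem isUDPower_append_UD : ∀ x : List Step, isUDPower (x ++ [U, D]) = isUDPower x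
  | [] | [U] | U :: U :: _ | U :: F :: _ | D :: _ | F :: _ => rfl
  | U :: D :: x => isUDPower_append_UD x

theorem isUDPower_append_U_U (r : List Step) :
    ∀ x : List Step, isUDPower (x ++ U :: U :: r) = false
  | [] | [U] | U :: U :: _ | U :: F :: _ | D :: _ | F :: _ => rfl
  | U :: D :: x => isUDPower_append_U_U r x

namespace DH

theorem eq_nil_or_eq_cons_U {w : List Step} (h : DH w) : w = [] ∨ ∃ r, w = U :: r := by
  cases h with
  | nil => exact Or.inl rfl
  | cons α β => exact Or.inr ⟨_, rfl⟩

theorem eq_nil_or_eq_append_D {w : List Step} (h : DH w) : w = [] ∨ ∃ s, w = s ++ [D] := by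
  induction h with
  | nil => exact Or.inl rfl
  | cons α β _ _ _ _ ihβ =>
    refine Or.inr ?_
    rcases ihβ with rfl | ⟨s, rfl⟩
    · exact ⟨U :: α, by simp⟩
    · exact ⟨U :: (α ++ [D] ++ s), by simp⟩

theorem not_suffix_U {w : List Step} (h : DH w) : ¬ [U] <:+ w := by
  rcases h.eq_nil_or_eq_append_D with rfl | ⟨s, rfl⟩ <;> simp

theorem isUDPower_of_height_le_one {w : List Step} (h : DH w) (hw : height w ≤ 1) :
    isUDPower w := by
  induction h with
  | nil => rfl
  | cons α β hα _ hαβ _ ihβ =>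
    rcases hα.eq_nil_or_eq_cons_U with rfl | ⟨r, rfl⟩
    · exact ihβ (le_trans hαβ (by decide))
    · have hUU := count_U_sub_count_D_le_height
        (show [U, U] <+: U :: (U :: r ++ [D] ++ β) from ⟨r ++ [D] ++ β, by simp⟩)
      have : ([U, U] : List Step).count U - [U, U].count D = 2 := by decide
      omega

theorem isUDPower_eq {β : List Step} (h : DH β) :
    isUDPower β = (β.isEmpty || [U, D].isPrefixOf β) := by
  rcases h with _ | ⟨α, β', hα, hβ', hαβ'⟩
  · rfl
  · rcases hα.eq_nil_or_eq_cons_U with rfl | ⟨r, rfl⟩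
    · simpa [isUDPower, List.isPrefixOf] using
        hβ'.isUDPower_of_height_le_one (le_trans hαβ' (by decide))
    · rfl

end DH

theorem isPrefixOf_UUD_append {t : List Step} (ht : t ≠ []) (hU : ¬ [U] <:+ t)
    (y : List Step) : [U, U, D].isPrefixOf (t ++ y) = [U, U, D].isPrefixOf t := by
  match t, ht, hU with
  | [a], _, hU => cases a <;> simp_all [List.isPrefixOf]
  | [a, b], _, hU => cases a <;> cases b <;> simp_all [List.isPrefixOf]
  | a :: b :: c :: r, _, _ => simp [List.isPrefixOf]

theorem countFactor_UUD_append {x : List Step} (hx : ¬ [U] <:+ x) (y : List Step) :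
    countFactor [U, U, D] (x ++ y) = countFactor [U, U, D] x + countFactor [U, U, D] y :=
  List.countP_tails_append rfl y fun _ ht ht0 =>
    isPrefixOf_UUD_append ht0 (fun hUt => hx (hUt.trans ht)) y

theorem countFactor_UUD_up {β γ : List Step} (hβ : DH β) (hγ : DH γ) :
    countFactor [U, U, D] (U :: U :: (β ++ D :: (γ ++ [D]))) =
      countFactor [U, U, D] β + countFactor [U, U, D] γ + (isUDPower β).toNat := by
  have hγD : countFactor [U, U, D] (D :: (γ ++ [D])) = countFactor [U, U, D] γ := by
    have hγ' := countFactor_UUD_append hγ.not_suffix_U [D]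
    simp only [countFactor, List.tails_cons, List.countP_cons] at hγ' ⊢
    rw [hγ']
    simp [List.isPrefixOf]
  have hβD := countFactor_UUD_append hβ.not_suffix_U (D :: (γ ++ [D]))
  rw [hγD] at hβD
  simp only [countFactor, List.tails_cons, List.countP_cons] at hβD ⊢
  rw [hβD, hβ.isUDPower_eq]
  rcases hβ.eq_nil_or_eq_cons_U with rfl | ⟨r, rfl⟩
  · simp [List.isPrefixOf]
  · rcases r with _ | ⟨_ | _ | _, r⟩
    · exact absurd List.suffix_rfl hβ.not_suffix_U
    all_goals simp [List.isPrefixOf]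

def headFD : List Step → Bool
  | D :: _ => true
  | F :: r => headFD r
  | _ => false

def headUFD : List Step → Bool
  | U :: r => headFD r
  | _ => false

def countUFStarD (w : List Step) : ℕ :=
  w.tails.countP headUFD

theorem headFD_append (r y : List Step) :
    headFD (r ++ y) = if r.all (· == F) then headFD y else headFD r := by
  induction r with
  | nil => rfl
  | cons a r ih => cases a <;> simp [headFD, ih]

theorem headFD_eq_false_of_all_F {r : List Step} (hr : r.all (· == F)) : headFD r = false := by
  simpa [hr, headFD] using headFD_append r []

theorem headFD_append_eq_false {r y : List Step} (hr : headFD r = false)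
    (hy : headFD y = false) : headFD (r ++ y) = false := by
  rw [headFD_append]; split <;> assumption

theorem fThenD_F_cons (r : List Step) : fThenD (F :: r) = headFD r := by
  induction r with
  | nil => rfl
  | cons a r ih => cases a <;> simp [fThenD, headFD, ih]

theorem countUFStarD_eq_countUFD_add (w : List Step) :
    countUFStarD w = countUFD w + countFactor [U, D] w :=
  List.countP_eq_add_countP (fun t => by
    match t with
    | U :: F :: r => simp [headUFD, headFD, fThenD_F_cons, List.isPrefixOf]
    | [] | [U] | U :: D :: _ | U :: U :: _ | D :: _ | F :: _ => rfl) w.tails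

theorem countUFStarD_append {y : List Step} (hy : headFD y = false) (x : List Step) :
    countUFStarD (x ++ y) = countUFStarD x + countUFStarD y :=
  List.countP_tails_append rfl y fun t _ ht => by
    match t with
    | U :: r =>
      simp only [List.cons_append, headUFD, headFD_append, hy]
      split
      · next hr => exact (headFD_eq_false_of_all_F hr).symm
      · rfl
    | [] => exact absurd rfl ht
    | D :: r | F :: r => rfl

theorem countUFStarD_append_D {x : List Step}
    (hx : ∀ k, ¬ U :: List.replicate k F <:+ x) :
    countUFStarD (x ++ [D]) = countUFStarD x := by
  rw [countUFStarD, List.countP_tails_append rfl [D] fun t ht ht0 => ?_]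
  · rfl
  match t with
  | U :: r =>
    simp only [List.cons_append, headUFD, headFD_append]
    split
    · next hr =>
      exact absurd (List.eq_replicate_iff.2 ⟨rfl, by simpa using hr⟩ ▸ ht) (hx r.length)
    · rfl
  | [] => exact absurd rfl ht0
  | D :: r | F :: r => rfl

namespace Phi

theorem headFD_eq_false {β b : List Step} (h : Phi β b) : headFD b = false := by
  induction h with
  | nil => rfl
  | flat α a _ _ ih => exact headFD_append_eq_false ih rfl
  | up α β γ a b c _ _ _ _ _ _ iha _ ihc =>
    rw [List.append_assoc]
    exact headFD_append_eq_false iha (headFD_append_eq_false ihc rfl)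

theorem not_suffix_U_replicate_F {β b : List Step} (h : Phi β b) (k : ℕ) :
    ¬ U :: List.replicate k F <:+ b := by
  induction h generalizing k with
  | nil => simp
  | flat α a _ _ ih =>
    cases k with
    | zero => simp
    | succ k =>
      rw [List.replicate_succ', ← List.cons_append,
        List.suffix_append_inj_of_length_eq rfl]
      exact fun hk => ih k hk.1
  | up α β γ a b c =>
    obtain ⟨s, hs⟩ : ∃ s, a ++ c ++ U :: (b ++ [D]) = s ++ [D] := ⟨a ++ c ++ [U] ++ b, by simp⟩
    rw [hs]
    cases k with
    | zero => simp
    | succ k =>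
      rw [List.replicate_succ', ← List.cons_append,
        List.suffix_append_inj_of_length_eq (s₁ := [F]) (s₂ := [D]) rfl]
      simp

theorem all_F_eq_isUDPower {β b : List Step} (h : Phi β b) :
    b.all (· == F) = isUDPower β := by
  induction h with
  | nil => rfl
  | flat α a _ _ ih => simp [isUDPower_append_UD, ih]
  | up α β γ a b c =>
    rw [show α ++ [U, U] ++ β ++ [D] ++ γ ++ [D] = α ++ U :: U :: (β ++ D :: γ ++ [D]) by simp,
      isUDPower_append_U_U]
    simp

theorem countUFStarD_U_append_D {β b : List Step} (h : Phi β b) :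
    countUFStarD (U :: (b ++ [D])) = countUFStarD b + (b.all (· == F)).toNat := by
  have hU : headUFD (U :: (b ++ [D])) = b.all (· == F) := by
    simp only [headUFD, headFD_append, h.headFD_eq_false]
    cases b.all (· == F) <;> rfl
  rw [← countUFStarD_append_D h.not_suffix_U_replicate_F, countUFStarD, List.tails_cons,
    List.countP_cons, hU]
  cases b.all (· == F) <;> rfl

theorem countFactor_UUD_eq_countUFStarD {P m : List Step} (h : Phi P m) :
    countFactor [U, U, D] P = countUFStarD m := by
  induction h with
  | nil => rfl
  | flat α a hα _ ih =>
    rw [countFactor_UUD_append hα.not_suffix_U, countUFStarD_append rfl, ih]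
    rfl
  | up α β γ a b c hα hβ hγ _ hb hc ihα ihβ ihγ =>
    have hP : α ++ [U, U] ++ β ++ [D] ++ γ ++ [D] = α ++ U :: U :: (β ++ D :: (γ ++ [D])) := by
      simp
    rw [hP, countFactor_UUD_append hα.not_suffix_U, countFactor_UUD_up hβ hγ, List.append_assoc,
      countUFStarD_append (headFD_append_eq_false hc.headFD_eq_false rfl), countUFStarD_append rfl, hb.countUFStarD_U_append_D,
      hb.all_F_eq_isUDPower, ihα, ihβ, ihγ]
    omega

end Phi

theorem stmt13_general (P m : List Step) (hphi : Phi P m) :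
    countFactor [Step.U, Step.U, Step.D] P =
      countUFD m + countFactor [Step.U, Step.D] m := by
  rw [hphi.countFactor_UUD_eq_countUFStarD, countUFStarD_eq_countUFD_add]

/-- φ transports UUD: #UUD(P) = #UF⁺D(φP) + #UD(φP). -/
theorem stmt13 (n : ℕ) (P m : List Step) (hP : DH P) (hlen : P.length = 2 * n)
    (hphi : Phi P m) :
    countFactor [Step.U, Step.U, Step.D] P =
      countUFD m + countFactor [Step.U, Step.D] m :=
  stmt13_general P m hphi
end

section
/- For every n ≥ 1, a path P ∈ D_n^{h,≥} ends with the factor UD if and only if φ(P) ends with a flat step F. Moreover P = (UD)^n if and only if φ(P) = F^n. -/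
open Step

/-! The last rule of `φ` applied to `P` can be read off from the end of `P` and from the end of
`φ(P)` alike: the rule `αUD ↦ φ(α)F` ends both in `UD` and in `F`, while the rule
`αUUβDγD ↦ φ(α)φ(γ)Uφ(β)D` ends `P` in `DD` (the nonempty `γ` being itself a path ending in `D`)
and `φ(P)` in `D`. Both claims follow, the second by induction on `n`. -/

theorem append_DD_ne_append_UD (r α : List Step) : r ++ [D, D] ≠ α ++ [U, D] := by
  intro h
  simpa using congrArg List.reverse h

theorem append_D_ne_append_F (w a : List Step) : w ++ [D] ≠ a ++ [F] := by
  intro h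
  simpa using congrArg List.reverse h

theorem flatten_replicate_succ_UD (k : ℕ) :
    (List.replicate (k + 1) [U, D]).flatten = (List.replicate k [U, D]).flatten ++ [U, D] := by
  simp [List.replicate_succ']

namespace Phi

variable {P m : List Step}

theorem eq_nil_or_exists_eq_append_D (h : Phi P m) : P = [] ∨ ∃ q, P = q ++ [D] := by
  cases h with
  | nil => exact .inl rfl
  | flat α _ _ _ => exact .inr ⟨α ++ [U], by simp⟩
  | up α β γ _ _ _ _ _ _ _ _ _ => exact .inr ⟨α ++ [U, U] ++ β ++ [D] ++ γ, by simp⟩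

theorem cases_last (h : Phi P m) :
    P = [] ∧ m = [] ∨
      (∃ α a, Phi α a ∧ P = α ++ [U, D] ∧ m = a ++ [F]) ∨
      (∃ r, P = r ++ [D, D]) ∧ ∃ w, m = w ++ [D] := by
  cases h with
  | nil => exact .inl ⟨rfl, rfl⟩
  | flat α a _ hα => exact .inr (.inl ⟨α, a, hα, rfl, rfl⟩)
  | up α β γ a b c _ _ _ _ _ hγ =>
    refine .inr (.inr ⟨?_, a ++ c ++ U :: b, by simp⟩)
    rcases hγ.eq_nil_or_exists_eq_append_D with rfl | ⟨q, rfl⟩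
    · exact ⟨α ++ [U, U] ++ β, by simp⟩
    · exact ⟨α ++ [U, U] ++ β ++ [D] ++ q, by simp⟩

theorem endsWith_UD_iff_endsWith_F (h : Phi P m) :
    (∃ α, P = α ++ [U, D]) ↔ ∃ a, m = a ++ [F] := by
  rcases h.cases_last with ⟨rfl, rfl⟩ | ⟨α, a, -, rfl, rfl⟩ | ⟨⟨r, rfl⟩, w, rfl⟩
  · simp
  · exact ⟨fun _ => ⟨a, rfl⟩, fun _ => ⟨α, rfl⟩⟩
  · exact ⟨fun ⟨α, hα⟩ => absurd hα (append_DD_ne_append_UD r α),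
      fun ⟨a, ha⟩ => absurd ha (append_D_ne_append_F w a)⟩

theorem eq_replicate_F_of_eq_flatten_replicate_UD (k : ℕ) (h : Phi P m)
    (hP : P = (List.replicate k [U, D]).flatten) : m = List.replicate k F := by
  induction k generalizing P m with
  | zero =>
    subst hP
    rcases h.cases_last with ⟨-, rfl⟩ | ⟨α, a, -, hα, -⟩ | ⟨⟨r, hr⟩, -⟩ <;> simp_all
  | succ k ih =>
    rw [flatten_replicate_succ_UD] at hP
    rcases h.cases_last with ⟨rfl, -⟩ | ⟨α, a, hα, rfl, rfl⟩ | ⟨⟨r, rfl⟩, -⟩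
    · simp at hP
    · rw [ih hα (List.append_cancel_right hP), List.replicate_succ']
    · exact absurd hP (append_DD_ne_append_UD r _)

theorem eq_flatten_replicate_UD_of_eq_replicate_F (k : ℕ) (h : Phi P m)
    (hm : m = List.replicate k F) : P = (List.replicate k [U, D]).flatten := by
  induction k generalizing P m with
  | zero =>
    subst hm
    rcases h.cases_last with ⟨rfl, -⟩ | ⟨α, a, -, -, ha⟩ | ⟨-, w, hw⟩ <;> simp_all
  | succ k ih =>
    rw [List.replicate_succ'] at hm
    rcases h.cases_last with ⟨-, rfl⟩ | ⟨α, a, hα, rfl, rfl⟩ | ⟨-, w, rfl⟩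
    · simp at hm
    · rw [ih hα (List.append_cancel_right hm), flatten_replicate_succ_UD]
    · exact absurd hm (append_D_ne_append_F w _)

end Phi

theorem stmt18_general (n : ℕ) (P m : List Step)
    (hphi : Phi P m) :
    ((∃ α : List Step, P = α ++ [Step.U, Step.D]) ↔ (∃ a : List Step, m = a ++ [Step.F])) ∧
    (P = (List.replicate n ([Step.U, Step.D] : List Step)).flatten ↔
      m = List.replicate n Step.F) :=
  ⟨hphi.endsWith_UD_iff_endsWith_F,
    ⟨hphi.eq_replicate_F_of_eq_flatten_replicate_UD n,
      hphi.eq_flatten_replicate_UD_of_eq_replicate_F n⟩⟩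

/-- P ends with UD iff φ(P) ends with F; and P = (UD)ⁿ iff φ(P) = Fⁿ. -/
theorem stmt18 (n : ℕ) (hn : 1 ≤ n) (P m : List Step) (hP : DH P) (hlen : P.length = 2 * n)
    (hphi : Phi P m) :
    ((∃ α : List Step, P = α ++ [Step.U, Step.D]) ↔ (∃ a : List Step, m = a ++ [Step.F])) ∧
    (P = (List.replicate n ([Step.U, Step.D] : List Step)).flatten ↔
      m = List.replicate n Step.F) :=
  stmt18_general n P m hphi
end
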